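/- Trees of finite height, considered as partial orders (T, ≤), are pseudofinite: every first-order sentence in the language {≤} true in some finite-height tree is true in some finite tree. -/

import Mathlib

open FirstOrder Language

/-- The language with a single binary relation `≤`. -/
def LLE : FirstOrder.Language where
  Functions := fun _ => Empty
  Relations := fun n => match n with
    | 2 => Unit
    | _ => Empty

/-- The interpretation of the binary relation `≤`. -/
def leOn {M : Type*} (s : LLE.Structure M) (x y : M) : Prop :=
  s.RelMap (n := 2) (() : LLE.Relations 2) ![x, y]

/-- `M` is a tree as a partial order: `≤` is a partial order with a least element (the root) in
which the set of strict predecessors of every element is finite and linearly ordered. -/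
def IsOrderTree (M : Type*) (s : LLE.Structure M) : Prop :=
  (∀ x : M, leOn s x x) ∧
  (∀ x y : M, leOn s x y → leOn s y x → x = y) ∧
  (∀ x y z : M, leOn s x y → leOn s y z → leOn s x z) ∧
  (∃ r : M, ∀ x, leOn s r x) ∧
  (∀ x : M, {y | leOn s y x ∧ y ≠ x}.Finite) ∧
  (∀ x y z : M, leOn s y x → leOn s z x → (leOn s y z ∨ leOn s z y))

/-- `M` has height at most `h`: every element has at most `h` strict predecessors. -/
def OrderHeightLe (M : Type*) (s : LLE.Structure M) (h : ℕ) : Prop :=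
  ∀ x : M, {y | leOn s y x ∧ y ≠ x}.ncard ≤ h

/-!
Prune the tree: at every node keep, for each depth-`G` type of the subtrees above its children,
only `κ` children of that type (all of them if there are fewer). There are finitely many types and
the height is bounded, so the pruned tree is finite, and every node has the same depth-`G` type in
the pruned tree as in the original one. The duplicator then wins the `n`-round
Ehrenfeucht–Fraïssé game between the two trees by keeping a partial isomorphism of lower sets
that pairs nodes of equal type: a move is answered by adding the at most `h + 1` missing ancestors
one at a time, matching a child of a matched node with an unmatched child of the same type of its
partner, which exists because fewer than `κ` nodes are matched so far. Every such step uses up one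
level of type depth, whence `G = (h + 1) n` and `κ = G + 1`.
-/

open Set

namespace Set

variable {γ δ : Type*}

theorem Nonempty.diff_of_min_encard_eq {A A' : Set γ} {B B' : Set δ} {κ : ℕ∞}
    (hA : (A \ A').Nonempty) (hAB : min A.encard κ = min B.encard κ)
    (hcard : (A ∩ A').encard = (B ∩ B').encard) (hκ : (A ∩ A').encard < κ) :
    (B \ B').Nonempty := by
  rw [sdiff_nonempty] at hA ⊢
  intro hBB'
  rw [inter_eq_left.2 hBB'] at hcard
  have hB : B.encard < κ := hcard ▸ hκ
  have hAB' : min A.encard κ = B.encard := hAB.trans (min_eq_left hB.le)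
  have hAκ : A.encard < κ := (min_lt_iff.1 (hAB' ▸ hB)).resolve_right (lt_irrefl _)
  rw [min_eq_left hAκ.le, ← hcard] at hAB'
  have hfin : (A ∩ A').Finite := encard_lt_top_iff.1 (hκ.trans_le le_top)
  exact hA (inter_eq_left.1 (hfin.eq_of_subset_of_encard_le inter_subset_left hAB'.le))

/-- Keeping `min (#fibre) κ` elements of every fibre of `τ` preserves `min (#C) κ` for every union
`C` of fibres. -/
theorem exists_finite_subset_min_encard_inter_eq {ι : Type*} [Finite ι] (τ : γ → ι) (A : Set γ)
    (κ : ℕ) : ∃ B ⊆ A, B.Finite ∧ ∀ C : Set γ, (∀ x y, τ x = τ y → x ∈ C → y ∈ C) →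
      min (B ∩ C).encard κ = min (A ∩ C).encard κ := by
  choose pick hpick using fun i => exists_subset_encard_eq (min_le_left (A ∩ τ ⁻¹' {i}).encard κ)
  have hpick_fin (i : ι) : (pick i).Finite :=
    finite_of_encard_le_coe ((hpick i).2.trans_le (min_le_right _ _))
  refine ⟨⋃ i, pick i, iUnion_subset fun i => (hpick i).1.trans inter_subset_left,
    finite_iUnion hpick_fin, fun C hC => ?_⟩
  have hpick_sub (x : γ) (hx : x ∈ C) : pick (τ x) ⊆ (⋃ i, pick i) ∩ C := fun y hy =>
    ⟨mem_iUnion_of_mem _ hy, hC x y ((hpick _).1 hy).2.symm hx⟩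
  by_cases hbig : ∃ x ∈ A ∩ C, (κ : ℕ∞) ≤ (A ∩ τ ⁻¹' {τ x}).encard
  · obtain ⟨x, hx, hκ⟩ := hbig
    have hB : (κ : ℕ∞) ≤ ((⋃ i, pick i) ∩ C).encard := by
      refine le_trans ?_ (encard_le_encard (hpick_sub x hx.2))
      rw [(hpick _).2, min_eq_right hκ]
    have hA : (κ : ℕ∞) ≤ (A ∩ C).encard :=
      hκ.trans (encard_le_encard fun y hy => ⟨hy.1, hC x y hy.2.symm hx.2⟩)
    rw [min_eq_right hB, min_eq_right hA]
  · push Not at hbig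
    suffices A ∩ C ⊆ ⋃ i, pick i by
      rw [subset_antisymm (inter_subset_inter_left C (iUnion_subset fun i =>
        (hpick i).1.trans inter_subset_left)) (subset_inter this inter_subset_right)]
    intro x hx
    have hfib : pick (τ x) = A ∩ τ ⁻¹' {τ x} := by
      refine (hpick_fin _).eq_of_subset_of_encard_le (hpick _).1 ?_
      rw [(hpick _).2, min_eq_left (hbig x hx).le]
    exact mem_iUnion_of_mem (τ x) (hfib ▸ ⟨hx.1, rfl⟩)

end Set

theorem Iio_eq_setOf_le_and_ne {α : Type*} [PartialOrder α] (x : α) :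
    Iio x = {y | y ≤ x ∧ y ≠ x} :=
  ext fun _ => lt_iff_le_and_ne

theorem IsLowerSet.insert_of_Iio_subset {α : Type*} [PartialOrder α] {D : Set α} {a : α}
    (hD : IsLowerSet D) (ha : Iio a ⊆ D) : IsLowerSet (insert a D) := by
  rintro x y hyx (rfl | hx)
  · obtain rfl | hlt := eq_or_lt_of_le hyx
    exacts [mem_insert _ _, mem_insert_of_mem _ (ha hlt)]
  · exact mem_insert_of_mem _ (hD hyx hx)

theorem exists_covBy_of_finite_Iio {α : Type*} [PartialOrder α] {a x : α}
    (hfin : (Iio x).Finite) (hax : a < x) : ∃ m, m ⋖ x := by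
  obtain ⟨m, hm⟩ := hfin.exists_maximal ⟨a, hax⟩
  exact ⟨m, hm.1, fun c hmc hcx => not_le_of_gt hmc (hm.2 hcx hmc.le)⟩

/-- Together with an `OrderBot`, this is a tree in the sense of `IsOrderTree`. -/
class IsTreeOrder (α : Type*) [PartialOrder α] : Prop where
  finite_Iio (x : α) : (Iio x).Finite
  isChain_Iic (x : α) : IsChain (· ≤ ·) (Iic x)

namespace IsTreeOrder

variable {α : Type*} [PartialOrder α] [IsTreeOrder α] {a b c d m : α}

instance subtype (S : Set α) : IsTreeOrder S where
  finite_Iio x := (finite_Iio (x : α)).preimage Subtype.val_injective.injOn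
  isChain_Iic x _ ha _ hb hne := isChain_Iic (x : α) ha hb (Subtype.coe_ne_coe.2 hne)

theorem finite_Iic (a : α) : (Iic a).Finite := Iio_insert (a := a) ▸ (finite_Iio a).insert a

theorem Iio_eq_Iic_of_covBy (h : m ⋖ c) : Iio c = Iic m := by
  refine subset_antisymm (fun d hd => ?_) fun d hd => lt_of_le_of_lt hd h.lt
  rcases (isChain_Iic c).total (le_of_lt hd : d ≤ c) h.le with hdm | hmd
  · exact hdm
  · obtain rfl | hlt := eq_or_lt_of_le hmd
    exacts [le_rfl, (h.2 hlt hd).elim]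

theorem le_iff_le_of_covBy (h : m ⋖ c) (hd : d ≠ c) : d ≤ c ↔ d ≤ m := by
  refine ⟨fun hdc => ?_, fun hdm => hdm.trans h.le⟩
  exact (Iio_eq_Iic_of_covBy h).subset (lt_of_le_of_ne hdc hd)

theorem eq_of_covBy_of_covBy (ha : a ⋖ c) (hb : b ⋖ c) : a = b :=
  le_antisymm ((Iio_eq_Iic_of_covBy hb).subset ha.lt) ((Iio_eq_Iic_of_covBy ha).subset hb.lt)

theorem exists_covBy_of_ne_bot [OrderBot α] (ha : a ≠ ⊥) : ∃ m, m ⋖ a :=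
  exists_covBy_of_finite_Iio (finite_Iio a) (bot_lt_iff_ne_bot.2 ha)

theorem encard_Iic_le {h : ℕ} (hh : ∀ x : α, (Iio x).ncard ≤ h) (a : α) :
    (Iic a).encard ≤ h + 1 := by
  rw [← Iio_insert]
  refine (encard_insert_le _ _).trans (add_le_add_left ?_ 1)
  rw [← (finite_Iio a).cast_ncard_eq]
  exact_mod_cast hh a

theorem ncard_Iio_subtype_le (S : Set α) (x : S) : (Iio x).ncard ≤ (Iio (x : α)).ncard :=
  ncard_le_ncard_of_injOn Subtype.val (fun _ hy => hy) Subtype.val_injective.injOn (finite_Iio _)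

theorem _root_.IsLowerSet.finite_of_finite_covBy [OrderBot α] {S : Set α} (hS : IsLowerSet S)
    {h : ℕ} (hh : ∀ x : α, (Iio x).ncard ≤ h) (hch : ∀ v ∈ S, {c ∈ S | v ⋖ c}.Finite) :
    S.Finite := by
  suffices ∀ j, {x ∈ S | (Iio x).ncard ≤ j}.Finite from
    (this h).subset fun x hx => ⟨hx, hh x⟩
  intro j
  induction j with
  | zero =>
    refine (finite_singleton ⊥).subset fun x hx => ?_
    have : Iio x = ∅ := (ncard_eq_zero (finite_Iio x)).1 (Nat.le_zero.1 hx.2)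
    exact isMin_iff_eq_bot.1 (Iio_eq_empty_iff.1 this)
  | succ j ih =>
    refine ((ih.biUnion fun v hv => hch v hv.1).insert ⊥).subset fun x hx => ?_
    by_cases hx0 : x = ⊥
    · exact hx0 ▸ mem_insert _ _
    obtain ⟨m, hm⟩ := exists_covBy_of_ne_bot hx0
    have hlt : (Iio m).ncard < (Iio x).ncard :=
      ncard_lt_ncard (Iio_ssubset_Iio hm.lt) (finite_Iio x)
    have := hx.2
    exact mem_insert_of_mem _ (mem_biUnion (x := m) ⟨hS hm.le hx.1, by omega⟩ ⟨hx.1, hm⟩)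

end IsTreeOrder

section SelectedSubtree

variable {α : Type*} [PartialOrder α] (sel : α → Set α)

def selectedSubtree : Set α := {x | ∀ v c, v ⋖ c → c ≤ x → c ∈ sel v}

theorem isLowerSet_selectedSubtree : IsLowerSet (selectedSubtree sel) :=
  fun _ _ hyx hx v c hvc hcy => hx v c hvc (hcy.trans hyx)

theorem bot_mem_selectedSubtree [OrderBot α] : ⊥ ∈ selectedSubtree sel :=
  fun _ _ hvc hc => absurd (le_bot_iff.1 hc ▸ hvc.lt) not_lt_bot

variable {sel} [IsTreeOrder α]

theorem covBy_sep_selectedSubtree (hsel : ∀ v, sel v ⊆ {c | v ⋖ c}) {v : α}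
    (hv : v ∈ selectedSubtree sel) : {c ∈ selectedSubtree sel | v ⋖ c} = sel v := by
  refine subset_antisymm (fun c hc => hc.1 v c hc.2 le_rfl) fun c hc => ⟨?_, hsel v hc⟩
  intro v' c' hvc' hc'c
  obtain rfl | hlt := eq_or_lt_of_le hc'c
  · exact IsTreeOrder.eq_of_covBy_of_covBy (hsel v hc) hvc' ▸ hc
  · exact hv v' c' hvc' ((IsTreeOrder.Iio_eq_Iic_of_covBy (hsel v hc)).subset hlt)

theorem finite_selectedSubtree [OrderBot α] (hsel : ∀ v, sel v ⊆ {c | v ⋖ c})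
    (hfin : ∀ v, (sel v).Finite) {h : ℕ} (hh : ∀ x : α, (Iio x).ncard ≤ h) :
    (selectedSubtree sel).Finite :=
  (isLowerSet_selectedSubtree sel).finite_of_finite_covBy hh fun v hv =>
    covBy_sep_selectedSubtree hsel hv ▸ hfin v

end SelectedSubtree

noncomputable def Set.cappedCard {γ : Type*} (κ : ℕ) (s : Set γ) : Fin (κ + 1) :=
  ⟨(min s.encard κ).toNat, Nat.lt_succ_of_le (ENat.toNat_le_of_le_natCast (min_le_right _ _))⟩

theorem Set.cappedCard_eq_iff {γ δ : Type*} {κ : ℕ} {s : Set γ} {t : Set δ} :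
    s.cappedCard κ = t.cappedCard κ ↔ min s.encard κ = min t.encard κ := by
  have hne {u : ℕ∞} : min u κ ≠ ⊤ := ne_top_of_le_ne_top (ENat.natCast_ne_top κ) (min_le_right _ _)
  rw [cappedCard, cappedCard, Fin.mk.injEq]
  exact ⟨fun h => by rw [← ENat.natCast_toNat hne, h, ENat.natCast_toNat hne], fun h => h ▸ rfl⟩

/-- The isomorphism types of depth-`g` trees, with children counted only up to `κ`; the counts
live in `Fin (κ + 1)` so that there are finitely many types. -/
def NodeType (κ : ℕ) : ℕ → Type
  | 0 => Unit
  | g + 1 => NodeType κ g × (NodeType κ g → Fin (κ + 1))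

instance NodeType.finite (κ : ℕ) : ∀ g, Finite (NodeType κ g)
  | 0 => inferInstanceAs (Finite Unit)
  | g + 1 =>
    haveI := NodeType.finite κ g
    inferInstanceAs (Finite (NodeType κ g × (NodeType κ g → Fin (κ + 1))))

noncomputable def nodeType {α : Type*} [LT α] (κ : ℕ) : (g : ℕ) → α → NodeType κ g
  | 0, _ => ()
  | g + 1, x => (nodeType κ g x, fun t => {c | x ⋖ c ∧ nodeType κ g c = t}.cappedCard κ)

section NodeType

variable {α β : Type*} [LT α] [LT β] {κ g : ℕ}

theorem nodeType_succ_eq_iff {x : α} {y : β} :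
    nodeType κ (g + 1) x = nodeType κ (g + 1) y ↔ nodeType κ g x = nodeType κ g y ∧
      ∀ t, min {c | x ⋖ c ∧ nodeType κ g c = t}.encard κ =
        min {c | y ⋖ c ∧ nodeType κ g c = t}.encard κ := by
  rw [nodeType, nodeType]
  exact Prod.mk_inj.trans (and_congr_right' (funext_iff.trans (forall_congr' fun _ =>
    Set.cappedCard_eq_iff)))

theorem nodeType_eq_of_le {g' : ℕ} (hg : g ≤ g') {x : α} {y : β}
    (h : nodeType κ g' x = nodeType κ g' y) : nodeType κ g x = nodeType κ g y := by
  induction g', hg using Nat.le_induction with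
  | base => exact h
  | succ g' _ ih => exact ih (nodeType_succ_eq_iff.1 h).1

end NodeType

theorem nodeType_coe_eq {α : Type*} [PartialOrder α] {κ g : ℕ} {S : Set α} (hS : IsLowerSet S)
    (hcount : ∀ v ∈ S, ∀ g' < g, ∀ t : NodeType κ g',
      min ({c ∈ S | v ⋖ c} ∩ {c | nodeType κ g' c = t}).encard κ =
        min ({c | v ⋖ c} ∩ {c | nodeType κ g' c = t}).encard κ) (v : S) :
    nodeType κ g v = nodeType κ g (v : α) := by
  induction g generalizing v with
  | zero => rfl
  | succ g ih =>
    have ih' := ih fun w hw g' hg' => hcount w hw g' (Nat.lt_succ_of_lt hg')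
    refine nodeType_succ_eq_iff.2 ⟨ih' v, fun t => ?_⟩
    have hcov (c : S) : v ⋖ c ↔ (v : α) ⋖ c :=
      (OrdConnected.apply_covBy_apply_iff (OrderEmbedding.subtype (· ∈ S))
        (by simpa using hS.ordConnected)).symm
    have himage : Subtype.val '' {c : S | v ⋖ c ∧ nodeType κ g c = t} =
        {c ∈ S | (v : α) ⋖ c} ∩ {c | nodeType κ g c = t} := by
      ext c
      simp only [mem_image, mem_inter_iff, mem_ofPred_eq, hcov, ih', Subtype.exists,
        exists_and_right, exists_eq_right, exists_prop]
    rw [← Subtype.val_injective.encard_image, himage, hcount v v.2 g (Nat.lt_succ_self g) t]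
    rfl

theorem exists_finite_nodeType_coe_eq {α : Type*} [PartialOrder α] [OrderBot α]
    [IsTreeOrder α] {h : ℕ} (hh : ∀ x : α, (Iio x).ncard ≤ h) (κ g : ℕ) :
    ∃ S : Set α, S.Finite ∧ ⊥ ∈ S ∧
      ∀ v : S, nodeType κ g v = nodeType κ g (v : α) := by
  choose sel hsel hfin hcount using fun v : α =>
    exists_finite_subset_min_encard_inter_eq (nodeType κ g) {c | v ⋖ c} κ
  refine ⟨selectedSubtree sel, finite_selectedSubtree hsel hfin hh, bot_mem_selectedSubtree sel,
    nodeType_coe_eq (isLowerSet_selectedSubtree sel) fun v hv g' hg' t => ?_⟩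
  have := hcount v {c | nodeType κ g' c = t}
    fun x y hxy hx => (nodeType_eq_of_le hg'.le hxy).symm.trans hx
  rwa [← covBy_sep_selectedSubtree hsel hv] at this

theorem Set.image_fst_preimage_swap {γ δ : Type*} (s : Set (γ × δ)) :
    Prod.fst '' (Prod.swap ⁻¹' s) = Prod.snd '' s := by
  rw [← image_swap_eq_preimage_swap, image_image]; rfl

theorem Set.image_snd_preimage_swap {γ δ : Type*} (s : Set (γ × δ)) :
    Prod.snd '' (Prod.swap ⁻¹' s) = Prod.fst '' s := by
  rw [← image_swap_eq_preimage_swap, image_image]; rfl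

section Position

variable {α β : Type*} [PartialOrder α] [OrderBot α] [PartialOrder β] [OrderBot β] {κ g : ℕ}
  {P : Set (α × β)}

/-- A position of the Ehrenfeucht–Fraïssé game on two trees: a partial isomorphism between lower
sets matching nodes of equal depth-`g` type, where the budget `κ` bounds the number of matched
pairs plus the remaining depth `g`. -/
structure IsEFPosition (κ g : ℕ) (P : Set (α × β)) : Prop where
  isLowerSet_fst : IsLowerSet (Prod.fst '' P)
  isLowerSet_snd : IsLowerSet (Prod.snd '' P)
  bot_mem : (⊥, ⊥) ∈ P
  le_iff_le : ∀ p ∈ P, ∀ q ∈ P, p.1 ≤ q.1 ↔ p.2 ≤ q.2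
  nodeType_eq : ∀ p ∈ P, nodeType κ g p.1 = nodeType κ g p.2
  encard_add_le : P.encard + g ≤ κ

namespace IsEFPosition

theorem mono (hP : IsEFPosition κ g P) {g' : ℕ} (hg : g' ≤ g) : IsEFPosition κ g' P :=
  { hP with
    nodeType_eq := fun p hp => nodeType_eq_of_le hg (hP.nodeType_eq p hp)
    encard_add_le := le_trans (by gcongr) hP.encard_add_le }

theorem swap (hP : IsEFPosition κ g P) : IsEFPosition κ g (Prod.swap ⁻¹' P) where
  isLowerSet_fst := (image_fst_preimage_swap P).symm ▸ hP.isLowerSet_snd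
  isLowerSet_snd := (image_snd_preimage_swap P).symm ▸ hP.isLowerSet_fst
  bot_mem := hP.bot_mem
  le_iff_le p hp q hq := (hP.le_iff_le _ hp _ hq).symm
  nodeType_eq p hp := (hP.nodeType_eq _ hp).symm
  encard_add_le := by
    rw [← image_swap_eq_preimage_swap, Prod.swap_injective.encard_image]
    exact hP.encard_add_le

theorem singleton_bot (hg : g < κ) (hbot : nodeType κ g (⊥ : α) = nodeType κ g (⊥ : β)) :
    IsEFPosition κ g {((⊥ : α), (⊥ : β))} where
  isLowerSet_fst := by rw [image_singleton, ← Iic_bot]; exact isLowerSet_Iic _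
  isLowerSet_snd := by rw [image_singleton, ← Iic_bot]; exact isLowerSet_Iic _
  bot_mem := rfl
  le_iff_le := by rintro _ rfl _ rfl; exact iff_of_true le_rfl le_rfl
  nodeType_eq := by rintro _ rfl; exact hbot
  encard_add_le := by rw [encard_singleton, add_comm]; exact_mod_cast hg

theorem encard_lt (hP : IsEFPosition κ (g + 1) P) : P.encard < κ := by
  have h := hP.encard_add_le
  have hfin : P.encard ≠ ⊤ := fun h' => by simp [h'] at h
  lift P.encard to ℕ using hfin with n
  norm_cast at h ⊢
  omega

theorem lt_iff_lt (hP : IsEFPosition κ g P) {p q : α × β} (hp : p ∈ P) (hq : q ∈ P) :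
    p.1 < q.1 ↔ p.2 < q.2 := by
  rw [lt_iff_le_not_ge, lt_iff_le_not_ge, hP.le_iff_le p hp q hq, hP.le_iff_le q hq p hp]

theorem injOn_fst (hP : IsEFPosition κ g P) : InjOn Prod.fst P := fun p hp q hq h =>
  Prod.ext h (le_antisymm ((hP.le_iff_le p hp q hq).1 h.le) ((hP.le_iff_le q hq p hp).1 h.ge))

theorem injOn_snd (hP : IsEFPosition κ g P) : InjOn Prod.snd P := fun p hp q hq h =>
  Prod.swap_injective (hP.swap.injOn_fst (x₁ := p.swap) hp (x₂ := q.swap) hq h)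

theorem covBy_of_covBy (hP : IsEFPosition κ g P) {p q : α × β} (hp : p ∈ P) (hq : q ∈ P)
    (h : p.1 ⋖ q.1) : p.2 ⋖ q.2 := by
  refine ⟨(hP.lt_iff_lt hp hq).1 h.lt, fun e hpe heq => ?_⟩
  obtain ⟨r, hr, rfl⟩ := hP.isLowerSet_snd heq.le (mem_image_of_mem _ hq)
  exact h.2 ((hP.lt_iff_lt hp hr).2 hpe) ((hP.lt_iff_lt hr hq).2 heq)

theorem covBy_iff (hP : IsEFPosition κ g P) {p q : α × β} (hp : p ∈ P) (hq : q ∈ P) :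
    p.1 ⋖ q.1 ↔ p.2 ⋖ q.2 :=
  ⟨hP.covBy_of_covBy hp hq, hP.swap.covBy_of_covBy (p := p.swap) (q := q.swap) hp hq⟩

variable [IsTreeOrder α] [IsTreeOrder β]

theorem insert_of_covBy (hP : IsEFPosition κ (g + 1) P) {p : α × β} (hp : p ∈ P) {a : α} {b : β}
    (ha : p.1 ⋖ a) (hb : p.2 ⋖ b) (haP : a ∉ Prod.fst '' P) (hbP : b ∉ Prod.snd '' P)
    (hab : nodeType κ g a = nodeType κ g b) : IsEFPosition κ g (insert (a, b) P) where
  isLowerSet_fst := by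
    rw [image_insert_eq]
    refine hP.isLowerSet_fst.insert_of_Iio_subset ?_
    rw [IsTreeOrder.Iio_eq_Iic_of_covBy ha]
    exact fun d hd => hP.isLowerSet_fst hd (mem_image_of_mem _ hp)
  isLowerSet_snd := by
    rw [image_insert_eq]
    refine hP.isLowerSet_snd.insert_of_Iio_subset ?_
    rw [IsTreeOrder.Iio_eq_Iic_of_covBy hb]
    exact fun d hd => hP.isLowerSet_snd hd (mem_image_of_mem _ hp)
  bot_mem := mem_insert_of_mem _ hP.bot_mem
  le_iff_le := by
    rintro p' (rfl | hp') q' (rfl | hq')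
    · exact iff_of_true le_rfl le_rfl
    · exact iff_of_false (fun h => haP (hP.isLowerSet_fst h (mem_image_of_mem _ hq')))
        (fun h => hbP (hP.isLowerSet_snd h (mem_image_of_mem _ hq')))
    · rw [IsTreeOrder.le_iff_le_of_covBy ha fun h => haP (h ▸ mem_image_of_mem _ hp'),
        IsTreeOrder.le_iff_le_of_covBy hb fun h => hbP (h ▸ mem_image_of_mem _ hp')]
      exact hP.le_iff_le p' hp' p hp
    · exact hP.le_iff_le p' hp' q' hq'
  nodeType_eq := by
    rintro p' (rfl | hp')
    exacts [hab, (hP.mono g.le_succ).nodeType_eq p' hp']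
  encard_add_le := by
    refine le_trans ?_ hP.encard_add_le
    calc (insert (a, b) P).encard + g ≤ P.encard + 1 + g := by gcongr; exact encard_insert_le _ _
      _ = P.encard + (g + 1 : ℕ) := by push_cast; ring

/-- The parents of `a` and of its partner have the same capped number of children of the type of
`a`, and fewer than `κ` of these are matched. -/
theorem exists_insert (hP : IsEFPosition κ (g + 1) P) {a : α} (haP : a ∉ Prod.fst '' P)
    (hIio : Iio a ⊆ Prod.fst '' P) : ∃ b, IsEFPosition κ g (insert (a, b) P) := by
  obtain ⟨m, hm⟩ := IsTreeOrder.exists_covBy_of_ne_bot fun h : a = ⊥ =>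
    haP (h ▸ mem_image_of_mem _ hP.bot_mem)
  obtain ⟨p, hp, rfl⟩ := hIio hm.lt
  have hP' := hP.mono g.le_succ
  let Q := {q ∈ P | p.1 ⋖ q.1 ∧ nodeType κ g q.1 = nodeType κ g a}
  have hA : {c | p.1 ⋖ c ∧ nodeType κ g c = nodeType κ g a} ∩ Prod.fst '' P = Prod.fst '' Q := by
    ext c
    constructor
    · rintro ⟨⟨hc, hct⟩, q, hq, rfl⟩
      exact ⟨q, ⟨hq, hc, hct⟩, rfl⟩
    · rintro ⟨q, ⟨hq, hc, hct⟩, rfl⟩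
      exact ⟨⟨hc, hct⟩, q, hq, rfl⟩
  have hB : {c | p.2 ⋖ c ∧ nodeType κ g c = nodeType κ g a} ∩ Prod.snd '' P = Prod.snd '' Q := by
    ext c
    constructor
    · rintro ⟨⟨hc, hct⟩, q, hq, rfl⟩
      exact ⟨q, ⟨hq, (hP.covBy_iff hp hq).2 hc, (hP'.nodeType_eq q hq).trans hct⟩, rfl⟩
    · rintro ⟨q, ⟨hq, hc, hct⟩, rfl⟩
      exact ⟨⟨(hP.covBy_iff hp hq).1 hc, (hP'.nodeType_eq q hq).symm.trans hct⟩, q, hq, rfl⟩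
  have hQ : (Prod.fst '' Q).encard = (Prod.snd '' Q).encard := by
    rw [(hP.injOn_fst.mono (sep_subset _ _)).encard_image,
      (hP.injOn_snd.mono (sep_subset _ _)).encard_image]
  have hQκ : (Prod.fst '' Q).encard < κ :=
    (encard_image_le _ _).trans_lt ((encard_le_encard (sep_subset _ _)).trans_lt hP.encard_lt)
  obtain ⟨b, ⟨hb, hbt⟩, hbP⟩ := Nonempty.diff_of_min_encard_eq
    (A := {c | p.1 ⋖ c ∧ nodeType κ g c = nodeType κ g a}) ⟨a, ⟨hm, rfl⟩, haP⟩
    ((nodeType_succ_eq_iff.1 (hP.nodeType_eq p hp)).2 _) (hA ▸ hB ▸ hQ) (hA ▸ hQκ)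
  exact ⟨b, hP.insert_of_covBy hp hm hb haP hbP hbt.symm⟩

theorem exists_superset_mem_fst (a : α) {k : ℕ} (hP : IsEFPosition κ (g + k) P)
    (hk : (Iic a \ Prod.fst '' P).encard ≤ k) :
    ∃ P' ⊇ P, IsEFPosition κ g P' ∧ a ∈ Prod.fst '' P' := by
  induction k generalizing P with
  | zero =>
    refine ⟨P, subset_rfl, hP, sdiff_eq_empty.1 ?_ (mem_Iic.2 le_rfl)⟩
    exact encard_eq_zero.1 (nonpos_iff_eq_zero.1 (by exact_mod_cast hk))
  | succ k ih =>
    by_cases ha : a ∈ Prod.fst '' P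
    · exact ⟨P, subset_rfl, hP.mono (Nat.le_add_right g _), ha⟩
    obtain ⟨c, hc⟩ := ((IsTreeOrder.finite_Iic a).sdiff).exists_minimal ⟨a, mem_Iic.2 le_rfl, ha⟩
    have hIio : Iio c ⊆ Prod.fst '' P := fun d hd => by
      by_contra hdP
      exact not_le_of_gt hd (hc.2 ⟨hd.le.trans hc.1.1, hdP⟩ hd.le)
    obtain ⟨b, hb⟩ := (hP : IsEFPosition κ (g + k + 1) P).exists_insert hc.1.2 hIio
    have hk' : (Iic a \ Prod.fst '' insert (c, b) P).encard ≤ k := by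
      rw [image_insert_eq, insert_eq, union_comm, ← sdiff_sdiff,
        ← ENat.add_le_add_iff_right ENat.one_ne_top, encard_sdiff_singleton_add_one hc.1]
      exact_mod_cast hk
    obtain ⟨P', hPP', hP', haP'⟩ := ih hb hk'
    exact ⟨P', (subset_insert _ _).trans hPP', hP', haP'⟩

theorem exists_superset_mem_snd (b : β) {k : ℕ} (hP : IsEFPosition κ (g + k) P)
    (hk : (Iic b \ Prod.snd '' P).encard ≤ k) :
    ∃ P' ⊇ P, IsEFPosition κ g P' ∧ b ∈ Prod.snd '' P' := by
  obtain ⟨P', hPP', hP', hbP'⟩ :=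
    hP.swap.exists_superset_mem_fst b (by rwa [image_fst_preimage_swap])
  exact ⟨Prod.swap ⁻¹' P', fun p hp => hPP' (show p.swap ∈ Prod.swap ⁻¹' P from hp), hP'.swap,
    by rwa [image_snd_preimage_swap]⟩

end IsEFPosition

end Position

namespace FirstOrder.Language.BoundedFormula

variable {L : Language} {γ : Type*}

def quantifierRank : ∀ {n : ℕ}, L.BoundedFormula γ n → ℕ
  | _, falsum => 0
  | _, equal _ _ => 0
  | _, rel _ _ => 0
  | _, imp φ ψ => max φ.quantifierRank ψ.quantifierRank
  | _, all φ => φ.quantifierRank + 1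

end FirstOrder.Language.BoundedFormula

instance leStructure (α : Type*) [LE α] : LLE.Structure α where
  funMap f := Empty.elim f
  RelMap {n} _ v := match n, v with
    | 2, v => v 0 ≤ v 1
    | _, _ => False

theorem leOn_leStructure {α : Type*} [LE α] (x y : α) : leOn (leStructure α) x y ↔ x ≤ y :=
  Iff.rfl

theorem leStructure_leOn {M : Type*} (s : LLE.Structure M) : @leStructure M ⟨leOn s⟩ = s := by
  obtain ⟨funMap, RelMap⟩ := s
  unfold leStructure
  congr
  · funext n f
    exact Empty.elim f
  · funext n r v
    match n, r with
    | 0, r => exact Empty.elim r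
    | 1, r => exact Empty.elim r
    | 2, () => exact congrArg (RelMap (n := 2) ()) (funext fun i => by fin_cases i <;> rfl)
    | _ + 3, r => exact Empty.elim r

theorem LLE.term_eq_var {γ : Type*} (t : LLE.Term γ) : ∃ i, t = Term.var i := by
  cases t with
  | var i => exact ⟨i, rfl⟩
  | func f _ => exact Empty.elim f

theorem realize_iff_of_backAndForth {M N : Type*} [LE M] [LE N]
    (R : ℕ → (k : ℕ) → (Fin k → M) → (Fin k → N) → Prop)
    (hle : ∀ {n k x y}, R n k x y → ∀ i j, x i ≤ x j ↔ y i ≤ y j)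
    (heq : ∀ {n k x y}, R n k x y → ∀ i j, x i = x j ↔ y i = y j)
    (hforth : ∀ {n k x y}, R (n + 1) k x y → ∀ a, ∃ b, R n (k + 1) (Fin.snoc x a) (Fin.snoc y b))
    (hback : ∀ {n k x y}, R (n + 1) k x y → ∀ b, ∃ a, R n (k + 1) (Fin.snoc x a) (Fin.snoc y b))
    {k : ℕ} (φ : LLE.BoundedFormula Empty k) {n : ℕ} (hφ : φ.quantifierRank ≤ n)
    {x : Fin k → M} {y : Fin k → N} (hxy : R n k x y) :
    φ.Realize default x ↔ φ.Realize default y := by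
  induction φ generalizing n with
  | falsum => exact Iff.rfl
  | equal t₁ t₂ =>
    obtain ⟨i | i, rfl⟩ := LLE.term_eq_var t₁
    · exact i.elim
    obtain ⟨j | j, rfl⟩ := LLE.term_eq_var t₂
    · exact j.elim
    exact heq hxy i j
  | rel r ts =>
    rename_i l
    match l, r with
    | 0, r => exact Empty.elim r
    | 1, r => exact Empty.elim r
    | _ + 3, r => exact Empty.elim r
    | 2, () =>
      obtain ⟨i | i, hi⟩ := LLE.term_eq_var (ts 0)
      · exact i.elim
      obtain ⟨j | j, hj⟩ := LLE.term_eq_var (ts 1)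
      · exact j.elim
      show (ts 0).realize _ ≤ (ts 1).realize _ ↔ (ts 0).realize _ ≤ (ts 1).realize _
      rw [hi, hj]
      exact hle hxy i j
  | imp φ ψ ihφ ihψ =>
    rw [BoundedFormula.quantifierRank, max_le_iff] at hφ
    simp only [BoundedFormula.realize_imp, ihφ hφ.1 hxy, ihψ hφ.2 hxy]
  | all φ ih =>
    rw [BoundedFormula.quantifierRank] at hφ
    obtain ⟨n, rfl⟩ := Nat.exists_eq_add_of_le' (Nat.succ_le_iff.1 hφ)
    simp only [BoundedFormula.realize_all]
    refine ⟨fun h b => ?_, fun h a => ?_⟩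
    · obtain ⟨a, hab⟩ := hback hxy b
      exact (ih (Nat.le_of_lt_succ hφ) hab).1 (h a)
    · obtain ⟨b, hab⟩ := hforth hxy a
      exact (ih (Nat.le_of_lt_succ hφ) hab).2 (h b)

theorem realize_iff_of_nodeType_bot_eq {α β : Type*} [PartialOrder α] [OrderBot α]
    [IsTreeOrder α] [PartialOrder β] [OrderBot β] [IsTreeOrder β] {h n : ℕ}
    (hα : ∀ x : α, (Iio x).ncard ≤ h) (hβ : ∀ y : β, (Iio y).ncard ≤ h)
    (hbot : nodeType ((h + 1) * n + 1) ((h + 1) * n) (⊥ : α) =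
      nodeType ((h + 1) * n + 1) ((h + 1) * n) (⊥ : β))
    {φ : LLE.Sentence} (hφ : φ.quantifierRank ≤ n) : α ⊨ φ ↔ β ⊨ φ := by
  let R (m k : ℕ) (x : Fin k → α) (y : Fin k → β) : Prop :=
    ∃ P, IsEFPosition ((h + 1) * n + 1) ((h + 1) * m) P ∧ ∀ i, (x i, y i) ∈ P
  have hsnoc {m k : ℕ} {x : Fin k → α} {y : Fin k → β} {P P' : Set (α × β)}
      (hxy : ∀ i, (x i, y i) ∈ P) (hPP' : P ⊆ P')
      (hP' : IsEFPosition ((h + 1) * n + 1) ((h + 1) * m) P') {a : α} {b : β}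
      (hab : (a, b) ∈ P') : R m (k + 1) (Fin.snoc x a) (Fin.snoc y b) := by
    refine ⟨P', hP', fun i => ?_⟩
    induction i using Fin.lastCases with
    | last => simpa using hab
    | cast i => simpa using hPP' (hxy i)
  refine realize_iff_of_backAndForth R (fun ⟨P, hP, hxy⟩ i j => hP.le_iff_le _ (hxy i) _ (hxy j))
    (fun ⟨P, hP, hxy⟩ i j => ⟨fun e => congrArg Prod.snd (hP.injOn_fst (hxy i) (hxy j) e),
      fun e => congrArg Prod.fst (hP.injOn_snd (hxy i) (hxy j) e)⟩) ?_ ?_ φ hφ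
    ⟨_, IsEFPosition.singleton_bot (Nat.lt_succ_self _) hbot, fun i => i.elim0⟩
  · rintro m k x y ⟨P, hP, hxy⟩ a
    obtain ⟨P', hPP', hP', ⟨a', b⟩, hab, rfl⟩ :=
      (hP : IsEFPosition _ ((h + 1) * m + (h + 1)) P).exists_superset_mem_fst a
        ((encard_le_encard sdiff_subset).trans (IsTreeOrder.encard_Iic_le hα a))
    exact ⟨b, hsnoc hxy hPP' hP' hab⟩
  · rintro m k x y ⟨P, hP, hxy⟩ b
    obtain ⟨P', hPP', hP', ⟨a, b'⟩, hab, rfl⟩ :=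
      (hP : IsEFPosition _ ((h + 1) * m + (h + 1)) P).exists_superset_mem_snd b
        ((encard_le_encard sdiff_subset).trans (IsTreeOrder.encard_Iic_le hβ b))
    exact ⟨a, hsnoc hxy hPP' hP' hab⟩

theorem isOrderTree_leStructure {α : Type*} [PartialOrder α] [OrderBot α] [IsTreeOrder α] :
    IsOrderTree α (leStructure α) :=
  ⟨le_refl, fun _ _ => le_antisymm, fun _ _ _ => le_trans, ⟨⊥, fun _ => bot_le⟩,
    fun x => (Iio_eq_setOf_le_and_ne x) ▸ IsTreeOrder.finite_Iio x,
    fun x _ _ hy hz => (IsTreeOrder.isChain_Iic x).total hy hz⟩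

theorem orderHeightLe_leStructure_iff {α : Type*} [PartialOrder α] {h : ℕ} :
    OrderHeightLe α (leStructure α) h ↔ ∀ x : α, (Iio x).ncard ≤ h := by
  simp only [OrderHeightLe, leOn_leStructure, Iio_eq_setOf_le_and_ne]

theorem IsOrderTree.exists_isTreeOrder {M : Type*} {s : LLE.Structure M} (hM : IsOrderTree M s) :
    ∃ inst : PartialOrder M, letI := inst
      ∃ _ : OrderBot M, IsTreeOrder M ∧ leStructure M = s :=
  let ⟨hrefl, hanti, htrans, ⟨r, hr⟩, hfin, hchain⟩ := hM
  letI : PartialOrder M :=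
    { le := leOn s, le_refl := hrefl, le_trans := htrans, le_antisymm := hanti }
  ⟨inferInstance, { bot := r, bot_le := hr },
    ⟨fun x => Iio_eq_setOf_le_and_ne x ▸ hfin x, fun x a ha b hb _ => hchain x a b ha hb⟩,
    leStructure_leOn s⟩

/-- finite-height trees as partial orders `(T, ≤)` are pseudofinite: every sentence
in the language `{≤}` true in some tree of finite height is true in some finite tree. -/
theorem finite_height_trees_pseudofinite_le (φ : LLE.Sentence)
    (hφ : ∃ (M : Type) (s : LLE.Structure M), IsOrderTree M s ∧
      (∃ h : ℕ, OrderHeightLe M s h) ∧ @Sentence.Realize LLE M s φ) :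
    ∃ (N : Type) (s : LLE.Structure N), IsOrderTree N s ∧ Finite N ∧
      @Sentence.Realize LLE N s φ := by
  obtain ⟨M, s, hM, ⟨h, hh⟩, hφ⟩ := hφ
  obtain ⟨_, _, _, rfl⟩ := hM.exists_isTreeOrder
  rw [orderHeightLe_leStructure_iff] at hh
  set n := φ.quantifierRank
  obtain ⟨S, hSfin, hbot, hS⟩ :=
    exists_finite_nodeType_coe_eq hh ((h + 1) * n + 1) ((h + 1) * n)
  let _ : OrderBot S := Subtype.orderBot hbot
  refine ⟨S, leStructure S, isOrderTree_leStructure, hSfin.to_subtype, ?_⟩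
  exact (realize_iff_of_nodeType_bot_eq hh
    (fun x => (IsTreeOrder.ncard_Iio_subtype_le S x).trans (hh _)) (hS ⊥).symm le_rfl).1 hφ
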